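/- arXiv:0909.5075 — 3 statements merged into one kernel-verified Lean document; each statement's English description precedes it below -/
import Mathlib

section
/- Additivity for independent systems with a classical factor: let A be the classical system with single test E, let 𝔅 be a test space, let α be a probability distribution on E and β a state on 𝔅, and let ω be the product state on the Foulis–Randall product of {E} with 𝔅 defined by ω(e,f) = α(e)·β(f). Then H(ω) = H(α) + H(β), where H(α) is the Shannon entropy of α and H(β), H(ω) are measurement entropies. -/
/-- Local measurement entropy of a state `α` at a test `E` (base-2 logarithm). -/
noncomputable def locEnt {X : Type*} (E : Finset X) (α : X → ℝ) : ℝ :=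
  ∑ x ∈ E, -(α x * Real.logb 2 (α x))

/-- Measurement entropy: infimum of local entropies over all tests of the test space. -/
noncomputable def measEnt {X : Type*} (𝔄 : Set (Finset X)) (α : X → ℝ) : ℝ :=
  sInf ((fun E => locEnt E α) '' 𝔄)

/-- A state on a test space: nonnegative on outcomes, summing to 1 on every test. -/
def IsState {X : Type*} (𝔄 : Set (Finset X)) (α : X → ℝ) : Prop :=
  (∀ E ∈ 𝔄, ∀ x ∈ E, 0 ≤ α x) ∧ (∀ E ∈ 𝔄, ∑ x ∈ E, α x = 1)

/-- The Foulis–Randall product of the classical test space `{E}` with a test space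
`𝔅`: its tests are the two-stage tests `{(e,f) : e ∈ E, f ∈ F e}`, one for each
choice of a test `F e ∈ 𝔅` for every `e`. -/
def frProd {Xa Y : Type*} [DecidableEq Xa] [DecidableEq Y]
    (E : Finset Xa) (𝔅 : Set (Finset Y)) : Set (Finset (Xa × Y)) :=
  {T | ∃ F : Xa → Finset Y, (∀ e ∈ E, F e ∈ 𝔅) ∧
    T = E.biUnion fun e => (F e).image fun f => (e, f)}

/-!
By the chain rule for `-x log x`, the product state has local entropy
`H_E(α) + ∑ₑ α(e) H_{F e}(β)` on the two-stage test built from `F`. This `α`-average of local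
entropies of `β` is at least `H(β)`, and the constant choices `F e = F` give exactly
`H_E(α) + H_F(β)`, which approaches `H_E(α) + H(β)` as `F` ranges over `𝔅`.
-/

open Finset Real

def twoStage {Xa Y : Type*} [DecidableEq Xa] [DecidableEq Y]
    (E : Finset Xa) (F : Xa → Finset Y) : Finset (Xa × Y) :=
  E.biUnion fun e => (F e).image fun f => (e, f)

theorem neg_mul_logb_mul (b x y : ℝ) :
    -(x * y * logb b (x * y)) = y * -(x * logb b x) + x * -(y * logb b y) := by
  have h : ∀ z, -(z * logb b z) = negMulLog z / log b := fun z => by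
    rw [negMulLog, logb]
    ring
  rw [h, h, h, negMulLog_mul]
  ring

theorem locEnt_nonneg {Y : Type*} {F : Finset Y} {β : Y → ℝ}
    (h0 : ∀ f ∈ F, 0 ≤ β f) (h1 : ∑ f ∈ F, β f = 1) : 0 ≤ locEnt F β := by
  refine sum_nonneg fun f hf => ?_
  have hle : β f ≤ 1 := h1 ▸ single_le_sum h0 hf
  exact neg_nonneg.mpr (mul_nonpos_of_nonneg_of_nonpos (h0 f hf)
    (logb_nonpos one_lt_two (h0 f hf) hle))

theorem measEnt_le_locEnt {Y : Type*} {𝔅 : Set (Finset Y)} {β : Y → ℝ} (hβ : IsState 𝔅 β)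
    {F : Finset Y} (hF : F ∈ 𝔅) : measEnt 𝔅 β ≤ locEnt F β :=
  csInf_le ⟨0, by rintro _ ⟨G, hG, rfl⟩; exact locEnt_nonneg (hβ.1 G hG) (hβ.2 G hG)⟩
    ⟨F, hF, rfl⟩

section TwoStage

variable {Xa Y : Type*} [DecidableEq Xa] [DecidableEq Y] {E : Finset Xa} {α : Xa → ℝ}
  {β : Y → ℝ}

theorem locEnt_twoStage {F : Xa → Finset Y} (hβ : ∀ e ∈ E, ∑ f ∈ F e, β f = 1) :
    locEnt (twoStage E F) (fun p => α p.1 * β p.2) =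
      locEnt E α + ∑ e ∈ E, α e * locEnt (F e) β := by
  have hdisj : (E : Set Xa).PairwiseDisjoint fun e => (F e).image fun f => (e, f) := by
    intro e _ e' _ hne
    simp only [Function.onFun, disjoint_left, mem_image]
    rintro _ ⟨f, -, rfl⟩ ⟨f', -, h⟩
    exact hne (congrArg Prod.fst h).symm
  have hfiber : ∀ e ∈ E, ∑ f ∈ F e, -(α e * β f * logb 2 (α e * β f)) =
      -(α e * logb 2 (α e)) + α e * locEnt (F e) β := fun e he => by
    simp only [neg_mul_logb_mul, sum_add_distrib, ← sum_mul, hβ e he, one_mul, locEnt,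
      ← mul_sum]
  rw [locEnt, twoStage, sum_biUnion hdisj, locEnt, ← sum_add_distrib]
  refine sum_congr rfl fun e he => ?_
  rw [sum_image fun _ _ _ _ h => (Prod.ext_iff.mp h).2, hfiber e he]

theorem locEnt_twoStage_const (hα : ∑ e ∈ E, α e = 1) {F : Finset Y}
    (hβ : ∑ f ∈ F, β f = 1) :
    locEnt (twoStage E fun _ => F) (fun p => α p.1 * β p.2) = locEnt E α + locEnt F β := by
  rw [locEnt_twoStage fun _ _ => hβ, ← sum_mul, hα, one_mul]

theorem add_measEnt_le_locEnt_twoStage {𝔅 : Set (Finset Y)} (hα : ∀ e ∈ E, 0 ≤ α e)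
    (hαsum : ∑ e ∈ E, α e = 1) (hβ : IsState 𝔅 β) {F : Xa → Finset Y}
    (hF : ∀ e ∈ E, F e ∈ 𝔅) :
    locEnt E α + measEnt 𝔅 β ≤ locEnt (twoStage E F) (fun p => α p.1 * β p.2) := by
  rw [locEnt_twoStage fun e he => hβ.2 _ (hF e he)]
  calc locEnt E α + measEnt 𝔅 β = locEnt E α + ∑ e ∈ E, α e * measEnt 𝔅 β := by
        rw [← sum_mul, hαsum, one_mul]
    _ ≤ locEnt E α + ∑ e ∈ E, α e * locEnt (F e) β := by
        gcongr with e he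
        · exact hα e he
        · exact measEnt_le_locEnt hβ (hF e he)

end TwoStage

/-- additivity of measurement entropy for an independent product of
a classical system with a general system: H(α ⊗ β) = H(α) + H(β). -/
theorem measEnt_additive_of_independent_classical {Xa Y : Type*}
    [DecidableEq Xa] [DecidableEq Y]
    (E : Finset Xa) (𝔅 : Set (Finset Y)) (h𝔅 : 𝔅.Nonempty)
    (α : Xa → ℝ) (hα : ∀ e ∈ E, 0 ≤ α e) (hαsum : ∑ e ∈ E, α e = 1)
    (β : Y → ℝ) (hβ : IsState 𝔅 β) :
    measEnt (frProd E 𝔅) (fun p => α p.1 * β p.2) =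
      locEnt E α + measEnt 𝔅 β := by
  have hconst : ∀ F ∈ 𝔅, twoStage E (fun _ => F) ∈ frProd E 𝔅 := fun F hF =>
    ⟨fun _ => F, fun _ _ => hF, rfl⟩
  refine csInf_eq_of_forall_ge_of_forall_gt_exists_lt ⟨_, _, hconst _ h𝔅.some_mem, rfl⟩ ?_ ?_
  · rintro _ ⟨_, ⟨F, hF, rfl⟩, rfl⟩
    exact add_measEnt_le_locEnt_twoStage hα hαsum hβ hF
  · intro w hw
    obtain ⟨_, ⟨F, hF, rfl⟩, hFw⟩ :=
      exists_lt_of_csInf_lt (h𝔅.image _) (lt_sub_iff_add_lt'.mpr hw)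
    refine ⟨_, ⟨_, hconst F hF, rfl⟩, ?_⟩
    simp only [locEnt_twoStage_const hαsum (hβ.2 F hF)]
    linarith
end

section
/- Monoentropic systems with closed pure-state sets are sharp: let 𝔄 be a test space with finite outcome space X, and let Ω ⊂ [0,1]^X be a compact convex set of states on 𝔄 such that the set of extreme points of Ω is closed, for every α ∈ Ω the infimum defining the measurement entropy is attained on some test, and H(α) = S(α) for every α ∈ Ω (monoentropicity). Then: (i) every extreme point α of Ω assigns probability 1 to some outcome x ∈ X; and (ii) for every outcome x ∈ X there is at most one state α ∈ Ω with α(x) = 1, and any such state is an extreme point of Ω. -/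
/-- Shannon entropy (base 2) of a finite probability vector. -/
noncomputable def shannon {n : ℕ} (p : Fin n → ℝ) : ℝ :=
  ∑ i, -(p i * Real.logb 2 (p i))

/-- Mixing (preparation) entropy of a point `ω` of a convex set `Ω`:
the infimum of the Shannon entropies of the coefficients over all finite
convex decompositions of `ω` into extreme points of `Ω`. -/
noncomputable def mixEnt {V : Type*} [AddCommGroup V] [Module ℝ V]
    (Ω : Set V) (ω : V) : ℝ :=
  sInf {h : ℝ | ∃ (n : ℕ) (p : Fin n → ℝ) (v : Fin n → V),
    (∀ i, 0 ≤ p i) ∧ (∑ i, p i = 1) ∧ (∀ i, v i ∈ Ω.extremePoints ℝ) ∧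
    ω = ∑ i, p i • v i ∧ h = shannon p}

open Finset

lemma mul_one_sub_le_neg_mul_logb {t : ℝ} (h0 : 0 ≤ t) (h1 : t ≤ 1) :
    t * (1 - t) ≤ -(t * Real.logb 2 t) := by
  rcases h0.eq_or_lt with rfl | ht
  · simp
  have hlog2 : Real.log 2 < 1 := Real.log_two_lt_d9.trans (by norm_num)
  have hlogb : 1 - t ≤ -Real.logb 2 t := by
    rw [Real.logb, neg_div', le_div_iff₀ (Real.log_pos one_lt_two)]
    nlinarith [Real.log_le_sub_one_of_pos ht, Real.log_nonpos h0 h1]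
  nlinarith

lemma neg_mul_logb_nonneg {t : ℝ} (h0 : 0 ≤ t) (h1 : t ≤ 1) : 0 ≤ -(t * Real.logb 2 t) :=
  (mul_nonneg h0 (sub_nonneg.2 h1)).trans (mul_one_sub_le_neg_mul_logb h0 h1)

lemma eq_zero_or_eq_one_of_neg_mul_logb_eq_zero {t : ℝ} (h0 : 0 ≤ t) (h1 : t ≤ 1)
    (h : -(t * Real.logb 2 t) = 0) : t = 0 ∨ t = 1 := by
  have := mul_one_sub_le_neg_mul_logb h0 h1
  rcases mul_eq_zero.1 (le_antisymm (h ▸ this) (mul_nonneg h0 (sub_nonneg.2 h1))) with h | h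
  · exact Or.inl h
  · exact Or.inr (sub_eq_zero.1 h).symm

section Shannon

variable {n : ℕ} {p : Fin n → ℝ}

lemma le_one_of_sum_eq_one (h0 : ∀ i, 0 ≤ p i) (h1 : ∑ i, p i = 1) (i : Fin n) : p i ≤ 1 :=
  h1 ▸ single_le_sum (fun j _ => h0 j) (mem_univ i)

lemma shannon_nonneg (h0 : ∀ i, 0 ≤ p i) (h1 : ∑ i, p i = 1) : 0 ≤ shannon p :=
  sum_nonneg fun i _ => neg_mul_logb_nonneg (h0 i) (le_one_of_sum_eq_one h0 h1 i)

lemma exists_one_sub_shannon_le (h0 : ∀ i, 0 ≤ p i) (h1 : ∑ i, p i = 1) :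
    ∃ j, 1 - shannon p ≤ p j := by
  have hn : (univ : Finset (Fin n)).Nonempty := univ_nonempty_iff.2 <| by
    by_contra hn
    simp [not_nonempty_iff.1 hn] at h1
  obtain ⟨j, -, hj⟩ := exists_max_image univ p hn
  refine ⟨j, ?_⟩
  have : 1 - p j ≤ shannon p :=
    calc 1 - p j = ∑ i, p i * (1 - p j) := by rw [← sum_mul, h1, one_mul]
      _ ≤ ∑ i, p i * (1 - p i) :=
        sum_le_sum fun i hi => mul_le_mul_of_nonneg_left (by linarith [hj i hi]) (h0 i)
      _ ≤ shannon p := sum_le_sum fun i _ =>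
        mul_one_sub_le_neg_mul_logb (h0 i) (le_one_of_sum_eq_one h0 h1 i)
  linarith

end Shannon

section ConvexHull

variable {E : Type*} [NormedAddCommGroup E] [NormedSpace ℝ E]

lemma norm_sum_smul_sub_le {n : ℕ} {p : Fin n → ℝ} {v : Fin n → E} {R : ℝ}
    (h0 : ∀ i, 0 ≤ p i) (h1 : ∑ i, p i = 1) (j : Fin n) (hR : ∀ i, ‖v i - v j‖ ≤ R) :
    ‖∑ i, p i • v i - v j‖ ≤ (1 - p j) * R := by
  have hsub : ∑ i, p i • v i - v j = ∑ i, p i • (v i - v j) := by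
    simp only [smul_sub, sum_sub_distrib, ← sum_smul, h1, one_smul]
  calc ‖∑ i, p i • v i - v j‖ ≤ ∑ i, p i * ‖v i - v j‖ := by
        rw [hsub]
        refine (norm_sum_le _ _).trans_eq (sum_congr rfl fun i _ => ?_)
        rw [norm_smul, Real.norm_of_nonneg (h0 i)]
    _ = ∑ i ∈ univ.erase j, p i * ‖v i - v j‖ := (sum_erase _ (by simp)).symm
    _ ≤ ∑ i ∈ univ.erase j, p i * R :=
        sum_le_sum fun i _ => mul_le_mul_of_nonneg_left (hR i) (h0 i)
    _ = (1 - p j) * R := by rw [← sum_mul, sum_erase_eq_sub (mem_univ j), h1]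

variable [FiniteDimensional ℝ E]

lemma exists_fin_convexCombination_of_mem_convexHull {s : Set E} {x : E}
    (hx : x ∈ convexHull ℝ s) :
    ∃ n ≤ Module.finrank ℝ E + 1, ∃ (p : Fin n → ℝ) (v : Fin n → E),
      (∀ i, 0 ≤ p i) ∧ ∑ i, p i = 1 ∧ (∀ i, v i ∈ s) ∧ ∑ i, p i • v i = x := by
  obtain ⟨ι, _, z, w, hzs, hind, hw0, hw1, rfl⟩ := eq_pos_convex_span_of_mem_convexHull hx
  let e := (Fintype.equivFin ι).symm
  refine ⟨Fintype.card ι, hind.card_le_finrank_succ.trans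
      (Nat.succ_le_succ (Submodule.finrank_le _)), w ∘ e, z ∘ e, fun i => (hw0 _).le,
      ?_, fun i => hzs ⟨_, rfl⟩, e.sum_comp fun i => w i • z i⟩
  rw [← hw1]
  exact e.sum_comp w

theorem IsCompact.convexHull_of_finiteDimensional {K : Set E} (hK : IsCompact K) :
    IsCompact (convexHull ℝ K) := by
  let comb (n : ℕ) (pv : (Fin n → ℝ) × (Fin n → E)) : E := ∑ i, pv.1 i • pv.2 i
  have hhull : convexHull ℝ K = ⋃ n ∈ range (Module.finrank ℝ E + 2),
      comb n '' (stdSimplex ℝ (Fin n) ×ˢ Set.univ.pi fun _ => K) := by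
    refine Set.Subset.antisymm (fun x hx => ?_) ?_
    · obtain ⟨n, hn, p, v, hp0, hp1, hv, rfl⟩ := exists_fin_convexCombination_of_mem_convexHull hx
      exact Set.mem_biUnion (mem_range.2 (by omega))
        ⟨(p, v), ⟨⟨hp0, hp1⟩, fun i _ => hv i⟩, rfl⟩
    · simp only [Set.iUnion_subset_iff]
      rintro n - _ ⟨⟨p, v⟩, ⟨⟨hp0, hp1⟩, hv⟩, rfl⟩
      exact mem_convexHull_of_exists_fintype p v hp0 hp1 (fun i => hv i trivial) rfl
  rw [hhull]
  refine (range _).isCompact_biUnion fun n _ =>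
    (IsCompact.prod (isCompact_stdSimplex ℝ (Fin n)) (isCompact_univ_pi fun _ => hK)).image ?_
  fun_prop

theorem convexHull_extremePoints_eq_of_isClosed {Ω : Set E} (hconv : Convex ℝ Ω)
    (hcomp : IsCompact Ω) (hclosed : IsClosed (Ω.extremePoints ℝ)) :
    convexHull ℝ (Ω.extremePoints ℝ) = Ω := by
  have hK : IsCompact (Ω.extremePoints ℝ) := hcomp.of_isClosed_subset hclosed extremePoints_subset
  rw [← hK.convexHull_of_finiteDimensional.isClosed.closure_eq,
    closure_convexHull_extremePoints hcomp hconv]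

end ConvexHull

section MixingEntropy

variable {E : Type*}

lemma mixEnt_nonneg [AddCommGroup E] [Module ℝ E] (Ω : Set E) (ω : E) : 0 ≤ mixEnt Ω ω :=
  Real.sInf_nonneg <| by
    rintro _ ⟨n, p, v, h0, h1, -, -, rfl⟩
    exact shannon_nonneg h0 h1

lemma mixEnt_eq_zero_of_mem_extremePoints [AddCommGroup E] [Module ℝ E] {Ω : Set E} {ω : E}
    (hω : ω ∈ Ω.extremePoints ℝ) : mixEnt Ω ω = 0 := by
  refine le_antisymm (csInf_le ⟨0, ?_⟩ ?_) (mixEnt_nonneg Ω ω)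
  · rintro _ ⟨n, p, v, h0, h1, -, -, rfl⟩
    exact shannon_nonneg h0 h1
  · exact ⟨1, fun _ => 1, fun _ => ω, fun _ => zero_le_one, by simp, fun _ => hω, by simp,
      by simp [shannon]⟩

variable [NormedAddCommGroup E] [NormedSpace ℝ E] [FiniteDimensional ℝ E]

lemma exists_shannon_lt_of_mixEnt_lt {Ω : Set E} {ω : E}
    (hω : ω ∈ convexHull ℝ (Ω.extremePoints ℝ)) {c : ℝ} (hc : mixEnt Ω ω < c) :
    ∃ (n : ℕ) (p : Fin n → ℝ) (v : Fin n → E), (∀ i, 0 ≤ p i) ∧ ∑ i, p i = 1 ∧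
      (∀ i, v i ∈ Ω.extremePoints ℝ) ∧ ω = ∑ i, p i • v i ∧ shannon p < c := by
  obtain ⟨n, -, p, v, h0, h1, hv, hω⟩ := exists_fin_convexCombination_of_mem_convexHull hω
  obtain ⟨_, ⟨n, p, v, h0, h1, hv, hω, rfl⟩, hlt⟩ :=
    exists_lt_of_csInf_lt (by exact ⟨shannon p, n, p, v, h0, h1, hv, hω.symm, rfl⟩) hc
  exact ⟨n, p, v, h0, h1, hv, hω, hlt⟩

theorem mem_extremePoints_of_mixEnt_eq_zero {Ω : Set E} (hconv : Convex ℝ Ω)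
    (hcomp : IsCompact Ω) (hclosed : IsClosed (Ω.extremePoints ℝ)) {ω : E} (hω : ω ∈ Ω)
    (h : mixEnt Ω ω = 0) : ω ∈ Ω.extremePoints ℝ := by
  rw [← hclosed.closure_eq, Metric.mem_closure_iff]
  intro δ hδ
  set R := Metric.diam Ω
  have hR : 0 ≤ R := Metric.diam_nonneg
  rw [← convexHull_extremePoints_eq_of_isClosed hconv hcomp hclosed] at hω
  obtain ⟨n, p, v, h0, h1, hv, rfl, hsh⟩ :=
    exists_shannon_lt_of_mixEnt_lt hω (c := δ / (R + 1)) (h ▸ by positivity)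
  obtain ⟨j, hj⟩ := exists_one_sub_shannon_le h0 h1
  have hvΩ (i) : v i ∈ Ω := extremePoints_subset (hv i)
  refine ⟨v j, hv j, ?_⟩
  rw [lt_div_iff₀ (by positivity)] at hsh
  calc dist (∑ i, p i • v i) (v j) = ‖∑ i, p i • v i - v j‖ := dist_eq_norm _ _
    _ ≤ (1 - p j) * R := norm_sum_smul_sub_le h0 h1 j fun i =>
        (dist_eq_norm (v i) (v j)) ▸ Metric.dist_le_diam_of_mem hcomp.isBounded (hvΩ i) (hvΩ j)
    _ ≤ shannon p * (R + 1) := by nlinarith [shannon_nonneg h0 h1]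
    _ < δ := hsh

end MixingEntropy

namespace IsState

variable {X : Type*} {𝔄 : Set (Finset X)} {α : X → ℝ} {E : Finset X} {x : X}

lemma le_one (hα : IsState 𝔄 α) (hE : E ∈ 𝔄) (hx : x ∈ E) : α x ≤ 1 :=
  hα.2 E hE ▸ single_le_sum (hα.1 E hE) hx

lemma locEnt_nonneg (hα : IsState 𝔄 α) (hE : E ∈ 𝔄) : 0 ≤ locEnt E α :=
  sum_nonneg fun _ hy => neg_mul_logb_nonneg (hα.1 E hE _ hy) (hα.le_one hE hy)

lemma measEnt_le_locEnt (hα : IsState 𝔄 α) (hE : E ∈ 𝔄) : measEnt 𝔄 α ≤ locEnt E α :=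
  csInf_le ⟨0, by rintro _ ⟨E', hE', rfl⟩; exact hα.locEnt_nonneg hE'⟩ ⟨E, hE, rfl⟩

lemma locEnt_eq_zero_of_apply_eq_one (hα : IsState 𝔄 α) (hE : E ∈ 𝔄) (hx : x ∈ E)
    (h : α x = 1) : locEnt E α = 0 := by
  classical
  have hzero : ∀ y ∈ E, y ≠ x → α y = 0 := by
    have hrest : ∑ y ∈ E.erase x, α y = 0 := by
      rw [sum_erase_eq_sub hx, hα.2 E hE, h, sub_self]
    intro y hy hyx
    exact (sum_eq_zero_iff_of_nonneg fun z hz => hα.1 E hE z (mem_of_mem_erase hz)).1 hrest y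
      (mem_erase.2 ⟨hyx, hy⟩)
  refine sum_eq_zero fun y hy => ?_
  by_cases hyx : y = x
  · simp [hyx, h]
  · simp [hzero y hy hyx]

lemma exists_apply_eq_one_of_locEnt_eq_zero (hα : IsState 𝔄 α) (hE : E ∈ 𝔄)
    (h : locEnt E α = 0) : ∃ x ∈ E, α x = 1 := by
  have hterm := (sum_eq_zero_iff_of_nonneg fun y hy =>
    neg_mul_logb_nonneg (hα.1 E hE y hy) (hα.le_one hE hy)).1 h
  by_contra! hne
  have : ∑ y ∈ E, α y = 0 := sum_eq_zero fun y hy =>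
    ((eq_zero_or_eq_one_of_neg_mul_logb_eq_zero (hα.1 E hE y hy) (hα.le_one hE hy)
      (hterm y hy)).resolve_right (hne y hy))
  rw [hα.2 E hE] at this
  exact one_ne_zero this

end IsState

theorem monoentropic_closed_pure_implies_sharp_general {X : Type*} [Fintype X]
    (𝔄 : Set (Finset X))
    (Ω : Set (X → ℝ)) (hconv : Convex ℝ Ω) (hcomp : IsCompact Ω)
    (hstates : ∀ α ∈ Ω, IsState 𝔄 α)
    (hclosed : IsClosed (Ω.extremePoints ℝ))
    (hattain : ∀ α ∈ Ω, ∃ E ∈ 𝔄, measEnt 𝔄 α = locEnt E α)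
    (hmono : ∀ α ∈ Ω, measEnt 𝔄 α = mixEnt Ω α) :
    (∀ α ∈ Ω.extremePoints ℝ, ∃ E ∈ 𝔄, ∃ x ∈ E, α x = 1) ∧
    (∀ E ∈ 𝔄, ∀ x ∈ E,
      (∀ α ∈ Ω, ∀ β ∈ Ω, α x = 1 → β x = 1 → α = β) ∧
      (∀ α ∈ Ω, α x = 1 → α ∈ Ω.extremePoints ℝ)) := by
  have hpure {E} (hE : E ∈ 𝔄) {x} (hx : x ∈ E) {α} (hα : α ∈ Ω) (hαx : α x = 1) :
      α ∈ Ω.extremePoints ℝ := by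
    refine mem_extremePoints_of_mixEnt_eq_zero hconv hcomp hclosed hα (le_antisymm ?_
      (mixEnt_nonneg Ω α))
    rw [← hmono α hα, ← (hstates α hα).locEnt_eq_zero_of_apply_eq_one hE hx hαx]
    exact (hstates α hα).measEnt_le_locEnt hE
  refine ⟨fun α hα => ?_, fun E hE x hx => ⟨fun α hα β hβ hαx hβx => ?_, fun α => hpure hE hx⟩⟩
  · obtain ⟨E, hE, hEα⟩ := hattain α hα.1
    refine ⟨E, hE, (hstates α hα.1).exists_apply_eq_one_of_locEnt_eq_zero hE ?_⟩
    rw [← hEα, hmono α hα.1, mixEnt_eq_zero_of_mem_extremePoints hα]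
  · have hmid : (1 / 2 : ℝ) • α + (1 / 2 : ℝ) • β ∈ Ω.extremePoints ℝ :=
      hpure hE hx (hconv hα hβ (by norm_num) (by norm_num) (by norm_num))
        (by norm_num [hαx, hβx])
    obtain ⟨hα_eq, hβ_eq⟩ := (mem_extremePoints.1 hmid).2 α hα β hβ
      ⟨1 / 2, 1 / 2, by norm_num, by norm_num, by norm_num, rfl⟩
    exact hα_eq.trans hβ_eq.symm

/-- a monoentropic system whose set of pure states is closed is
sharp: (i) every pure state assigns probability 1 to some outcome, and (ii) for
every outcome there is at most one state assigning it probability 1, and any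
such state is pure. -/
theorem monoentropic_closed_pure_implies_sharp {X : Type*} [Fintype X]
    (𝔄 : Set (Finset X)) (h𝔄 : 𝔄.Nonempty)
    (Ω : Set (X → ℝ)) (hconv : Convex ℝ Ω) (hcomp : IsCompact Ω)
    (hstates : ∀ α ∈ Ω, IsState 𝔄 α)
    (hclosed : IsClosed (Ω.extremePoints ℝ))
    (hattain : ∀ α ∈ Ω, ∃ E ∈ 𝔄, measEnt 𝔄 α = locEnt E α)
    (hmono : ∀ α ∈ Ω, measEnt 𝔄 α = mixEnt Ω α) :
    (∀ α ∈ Ω.extremePoints ℝ, ∃ E ∈ 𝔄, ∃ x ∈ E, α x = 1) ∧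
    (∀ E ∈ 𝔄, ∀ x ∈ E,
      (∀ α ∈ Ω, ∀ β ∈ Ω, α x = 1 → β x = 1 → α = β) ∧
      (∀ α ∈ Ω, α x = 1 → α ∈ Ω.extremePoints ℝ)) :=
  monoentropic_closed_pure_implies_sharp_general 𝔄 Ω hconv hcomp hstates hclosed hattain hmono
end

section
/- Steering bounds measurement entropy by mixing entropy: let 𝔄 and 𝔅 be test spaces with state spaces Ω^A, Ω^B compact convex, let ℭ be a test space on X_𝔄 × X_𝔅 containing all product tests, and let ω be a non-signaling state on ℭ. Suppose ω steers its marginal ω^B: for every finite convex decomposition ω^B = Σ_{i=1}^n p_i β_i into pairwise distinct extreme points β_i of Ω^B, there exists a test E = {a_1, …, a_n} ∈ 𝔄 with ω^A(a_i) = p_i and ω^{B|a_i} = β_i for every i with p_i > 0. Then H(ω^A) ≤ S(ω^B), where H(ω^A) is the measurement entropy of the marginal on 𝔄 and S(ω^B) is the mixing entropy of the marginal in Ω^B. -/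
/-- A state on a product outcome space is non-signaling if each one-sided
marginal sum is independent of the test chosen on the other side. -/
def NonSignaling {X Y : Type*} (𝔄 : Set (Finset X)) (𝔅 : Set (Finset Y))
    (ω : X × Y → ℝ) : Prop :=
  (∀ e : X, ∀ F ∈ 𝔅, ∀ F' ∈ 𝔅, ∑ f ∈ F, ω (e, f) = ∑ f ∈ F', ω (e, f)) ∧
  (∀ f : Y, ∀ E ∈ 𝔄, ∀ E' ∈ 𝔄, ∑ e ∈ E, ω (e, f) = ∑ e ∈ E', ω (e, f))

section Minkowski

open Set Module Topology Filter

theorem Convex.exists_forall_le_of_notMem_interior {E : Type*} [NormedAddCommGroup E]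
    [NormedSpace ℝ E] [FiniteDimensional ℝ E] {s : Set E} {x : E} (hs : Convex ℝ s)
    (hx : x ∈ s) (hxi : x ∉ interior s) :
    ∃ f : StrongDual ℝ E, f ≠ 0 ∧ ∀ a ∈ s, f a ≤ f x := by
  by_cases hint : (interior s).Nonempty
  · exact geometric_hahn_banach_of_nonempty_interior_point hs hxi hint
  -- With empty interior, `s` spans a proper affine subspace, on which any nonzero functional
  -- vanishing on its direction is constant.
  have hspan : affineSpan ℝ s ≠ ⊤ := fun h =>
    hint (hs.interior_nonempty_iff_affineSpan_eq_top.2 h)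
  have hdir : (affineSpan ℝ s).direction < ⊤ := lt_top_iff_ne_top.2 fun h => hspan
    ((AffineSubspace.direction_eq_top_iff_of_nonempty ⟨x, subset_affineSpan _ _ hx⟩).1 h)
  obtain ⟨f, hf0, hf⟩ := Submodule.exists_le_ker_of_lt_top _ hdir
  refine ⟨LinearMap.toContinuousLinearMap f,
    fun h => hf0 (LinearMap.toContinuousLinearMap.map_eq_zero_iff.1 h), fun a ha => le_of_eq ?_⟩
  have := hf <| AffineSubspace.vsub_mem_direction (subset_affineSpan ℝ _ ha)
    (subset_affineSpan ℝ _ hx)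
  simpa [sub_eq_zero] using this

theorem AffineMap.image_extremePoints_subset {𝕜 E F : Type*} [Ring 𝕜] [PartialOrder 𝕜]
    [IsOrderedRing 𝕜] [AddCommGroup E] [Module 𝕜 E] [AddCommGroup F] [Module 𝕜 F]
    (φ : E →ᵃ[𝕜] F) (hφ : Function.Injective φ) (A : Set E) :
    φ '' A.extremePoints 𝕜 ⊆ (φ '' A).extremePoints 𝕜 := by
  rintro _ ⟨x, hx, rfl⟩
  refine ⟨mem_image_of_mem _ hx.1, ?_⟩
  rintro _ ⟨y, hy, rfl⟩ _ ⟨z, hz, rfl⟩ hseg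
  rw [← image_openSegment, hφ.mem_set_image] at hseg
  rw [hx.2 hy hz hseg]

theorem subset_convexHull_extremePoints_of_subset_range {P E : Type*} [AddCommGroup P]
    [Module ℝ P] [TopologicalSpace P] [AddCommGroup E] [Module ℝ E] [TopologicalSpace E]
    (φ : P →ᵃ[ℝ] E) (hφ : IsClosedEmbedding φ)
    (hP : ∀ A : Set P, IsCompact A → Convex ℝ A → A ⊆ convexHull ℝ (A.extremePoints ℝ))
    {F : Set E} (hF : F ⊆ range φ) (hFc : IsCompact F) (hFv : Convex ℝ F) :
    F ⊆ convexHull ℝ (F.extremePoints ℝ) := by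
  have himg : φ '' (φ ⁻¹' F) = F := image_preimage_eq_of_subset hF
  calc F = φ '' (φ ⁻¹' F) := himg.symm
    _ ⊆ φ '' convexHull ℝ ((φ ⁻¹' F).extremePoints ℝ) :=
      image_mono (hP _ (hφ.isCompact_preimage hFc) (hFv.affine_preimage φ))
    _ = convexHull ℝ (φ '' (φ ⁻¹' F).extremePoints ℝ) := φ.image_convexHull _
    _ ⊆ convexHull ℝ (F.extremePoints ℝ) :=
      (convexHull_mono (φ.image_extremePoints_subset hφ.injective _)).trans_eq (by rw [himg])

theorem IsCompact.exists_mem_frontier_mem_segment {E : Type*} [AddCommGroup E] [Module ℝ E]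
    [TopologicalSpace E] [IsTopologicalAddGroup E] [ContinuousSMul ℝ E] [T2Space E]
    [Nontrivial E] {s : Set E} (hs : IsCompact s) {x : E} (hx : x ∈ s) :
    ∃ y ∈ frontier s, ∃ z ∈ frontier s, x ∈ segment ℝ y z := by
  obtain ⟨d, hd⟩ := exists_ne (0 : E)
  let g : ℝ →ᵃ[ℝ] E := AffineMap.lineMap x (x + d)
  have hg : ⇑g = fun t => t • d + x := by
    funext t; simp [g, AffineMap.lineMap_apply]
  have hgemb : IsClosedEmbedding g :=
    hg ▸ (Homeomorph.addRight x).isClosedEmbedding.comp (isClosedEmbedding_smul_left hd)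
  have hT : IsCompact (g ⁻¹' s) := hgemb.isCompact_preimage hs
  have h0 : (0 : ℝ) ∈ g ⁻¹' s := by simpa [hg] using hx
  obtain ⟨a, ha, hmin⟩ := hT.exists_isMinOn ⟨0, h0⟩ continuousOn_id
  obtain ⟨b, hb, hmax⟩ := hT.exists_isMaxOn ⟨0, h0⟩ continuousOn_id
  have hnhds : ∀ t, g t ∈ interior s → ∀ᶠ u in 𝓝 t, u ∈ g ⁻¹' s := fun t ht =>
    (hgemb.continuous.tendsto t).eventually (mem_interior_iff_mem_nhds.1 ht)
  have hya : g a ∈ frontier s := by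
    refine ⟨subset_closure ha, fun hi => ?_⟩
    obtain ⟨u, hu, hua⟩ := ((hnhds a hi).filter_mono nhdsWithin_le_nhds |>.and
      (self_mem_nhdsWithin (s := Iio a))).exists
    exact (hmin hu).not_gt hua
  have hzb : g b ∈ frontier s := by
    refine ⟨subset_closure hb, fun hi => ?_⟩
    obtain ⟨u, hu, hub⟩ := ((hnhds b hi).filter_mono nhdsWithin_le_nhds |>.and
      (self_mem_nhdsWithin (s := Ioi b))).exists
    exact (hmax hu).not_gt hub
  refine ⟨g a, hya, g b, hzb, ?_⟩
  rw [← image_segment, segment_eq_Icc ((hmin h0).trans (hmax h0))]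
  exact ⟨0, ⟨hmin h0, hmax h0⟩, by simp [hg]⟩

theorem IsCompact.subset_convexHull_extremePoints {E : Type*} [NormedAddCommGroup E]
    [NormedSpace ℝ E] [FiniteDimensional ℝ E] {s : Set E} (hs : IsCompact s)
    (hc : Convex ℝ s) : s ⊆ convexHull ℝ (s.extremePoints ℝ) := by
  induction hn : finrank ℝ E using Nat.strong_induction_on generalizing E with
  | _ n ih =>
  have hfrontier : ∀ y ∈ s, y ∉ interior s → y ∈ convexHull ℝ (s.extremePoints ℝ) := by
    intro y hy hyi
    obtain ⟨f, hf0, hf⟩ := hc.exists_forall_le_of_notMem_interior hy hyi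
    have hexp : IsExposed ℝ s (f.toExposed s) := ContinuousLinearMap.toExposed.isExposed
    let K := LinearMap.ker (f : E →ₗ[ℝ] ℝ)
    have hK : finrank ℝ K < n := hn ▸ Submodule.finrank_lt fun h =>
      hf0 (ContinuousLinearMap.coe_injective (LinearMap.ker_eq_top.1 h))
    let φ : K →ᵃ[ℝ] E := (AffineEquiv.vaddConst ℝ y).toAffineMap.comp K.subtype.toAffineMap
    have hφ : IsClosedEmbedding φ := (Homeomorph.addRight y).isClosedEmbedding.comp
      K.closed_of_finiteDimensional.isClosedEmbedding_subtypeVal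
    have hrange : f.toExposed s ⊆ range φ := fun u hu =>
      ⟨⟨u - y, by simpa [K, sub_eq_zero] using le_antisymm (hf u hu.1) (hu.2 y hy)⟩,
        by simp [φ]⟩
    exact convexHull_mono hexp.isExtreme.extremePoints_subset_extremePoints
      (subset_convexHull_extremePoints_of_subset_range φ hφ
        (fun A hA hA' => ih _ hK hA hA' rfl) hrange (hexp.isCompact hs) (hexp.convex hc)
        ⟨hy, hf⟩)
  intro x hx
  rcases subsingleton_or_nontrivial E with hE | hE
  · exact subset_convexHull ℝ _ ⟨hx, fun _ _ _ _ _ => Subsingleton.elim _ _⟩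
  obtain ⟨y, hy, z, hz, hxyz⟩ := hs.exists_mem_frontier_mem_segment hx
  have hfr : ∀ w ∈ frontier s, w ∈ convexHull ℝ (s.extremePoints ℝ) := fun w hw =>
    hfrontier w (hs.isClosed.frontier_subset hw) hw.2
  exact (convex_convexHull ℝ _).segment_subset (hfr y hy) (hfr z hz) hxyz

end Minkowski

open Finset

theorem neg_mul_logb_sum_le {ι : Type*} {b : ℝ} (hb : 1 < b) (s : Finset ι) {p : ι → ℝ}
    (hp : ∀ i ∈ s, 0 ≤ p i) :
    -((∑ i ∈ s, p i) * Real.logb b (∑ i ∈ s, p i)) ≤ ∑ i ∈ s, -(p i * Real.logb b (p i)) := by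
  rw [sum_mul, ← sum_neg_distrib]
  refine sum_le_sum fun i hi => neg_le_neg ?_
  rcases (hp i hi).eq_or_lt with h0 | h0
  · simp [← h0]
  · exact mul_le_mul_of_nonneg_left
      (Real.logb_le_logb_of_le hb h0 (single_le_sum hp hi)) (hp i hi)

theorem shannon_fiberwise_le {n m : ℕ} (c : Fin n → Fin m) {p : Fin n → ℝ}
    (hp : ∀ i, 0 ≤ p i) :
    shannon (fun j => ∑ i with c i = j, p i) ≤ shannon p := by
  rw [shannon, shannon, ← sum_fiberwise univ c]
  exact sum_le_sum fun j _ => neg_mul_logb_sum_le one_lt_two _ fun i _ => hp i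

theorem Fin.exists_injective_surjective_comp_eq {α : Type*} {n : ℕ} (v : Fin n → α) :
    ∃ (m : ℕ) (β : Fin m → α) (c : Fin n → Fin m),
      Function.Injective β ∧ Function.Surjective c ∧ β ∘ c = v := by
  classical
  let e := (univ.image v).equivFin
  refine ⟨_, fun j => e.symm j, fun i => e ⟨v i, mem_image_of_mem v (mem_univ i)⟩,
    Subtype.val_injective.comp e.symm.injective, fun j => ?_, by funext i; simp⟩
  obtain ⟨i, -, hi⟩ := mem_image.1 (e.symm j).2
  exact ⟨i, by simp [hi]⟩

theorem exists_injective_combination_shannon_le {V : Type*} [AddCommGroup V] [Module ℝ V] {n : ℕ}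
    {p : Fin n → ℝ} (hp : ∀ i, 0 ≤ p i) (v : Fin n → V) :
    ∃ (m : ℕ) (q : Fin m → ℝ) (β : Fin m → V), Function.Injective β ∧ (∀ j, 0 ≤ q j) ∧
      ∑ j, q j = ∑ i, p i ∧ (∀ j, β j ∈ Set.range v) ∧ ∑ j, q j • β j = ∑ i, p i • v i ∧
      shannon q ≤ shannon p := by
  obtain ⟨m, β, c, hβ, hc, rfl⟩ := Fin.exists_injective_surjective_comp_eq v
  refine ⟨m, fun j => ∑ i with c i = j, p i, β, hβ, fun j => sum_nonneg fun i _ => hp i,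
    sum_fiberwise univ c p, fun j => ?_, ?_, shannon_fiberwise_le c hp⟩
  · obtain ⟨i, rfl⟩ := hc j
    exact ⟨i, rfl⟩
  · rw [← sum_fiberwise univ c]
    refine sum_congr rfl fun j _ => ?_
    rw [sum_smul]
    exact sum_congr rfl fun i hi => by rw [Function.comp_apply, (mem_filter.1 hi).2]

theorem le_mixEnt {V : Type*} [NormedAddCommGroup V] [NormedSpace ℝ V] [FiniteDimensional ℝ V]
    {Ω : Set V} (hΩc : IsCompact Ω) (hΩv : Convex ℝ Ω) {ω : V} (hω : ω ∈ Ω) {c : ℝ}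
    (h : ∀ (n : ℕ) (p : Fin n → ℝ) (β : Fin n → V), (∀ i, 0 ≤ p i) → ∑ i, p i = 1 →
      (∀ i, β i ∈ Ω.extremePoints ℝ) → Function.Injective β → ω = ∑ i, p i • β i →
      c ≤ shannon p) :
    c ≤ mixEnt Ω ω := by
  obtain ⟨ι, _, w, z, hw0, hw1, hz, hωz⟩ :=
    mem_convexHull_iff_exists_fintype.1 (hΩc.subset_convexHull_extremePoints hΩv hω)
  let e := (Fintype.equivFin ι).symm
  refine le_csInf ⟨_, _, w ∘ e, z ∘ e, fun i => hw0 _, (e.sum_comp w).trans hw1,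
    fun i => hz _, (hωz ▸ e.sum_comp fun i => w i • z i).symm, rfl⟩ ?_
  rintro _ ⟨n, p, v, hp0, hp1, hv, rfl, rfl⟩
  obtain ⟨m, q, β, hβ, hq0, hq1, hβv, hqβ, hqp⟩ := exists_injective_combination_shannon_le hp0 v
  refine (h m q β hq0 (hq1.trans hp1) (fun j => ?_) hβ hqβ.symm).trans hqp
  obtain ⟨i, hi⟩ := hβv j
  exact hi ▸ hv i

theorem IsState.marginal_fst {X Y : Type*} {𝔄 : Set (Finset X)} {ℭ : Set (Finset (X × Y))}
    {ω : X × Y → ℝ} (hω : IsState ℭ ω) {F : Finset Y} (hprod : ∀ E ∈ 𝔄, E ×ˢ F ∈ ℭ)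
    {ωA : X → ℝ} (hωA : ∀ e, ωA e = ∑ f ∈ F, ω (e, f)) : IsState 𝔄 ωA := by
  refine ⟨fun E hE e he => ?_, fun E hE => ?_⟩
  · rw [hωA]
    exact sum_nonneg fun f hf => hω.1 _ (hprod E hE) _ (mem_product.2 ⟨he, hf⟩)
  · simp_rw [hωA, ← sum_product']
    exact hω.2 _ (hprod E hE)

theorem IsState.locEnt_nonneg_s19 {X : Type*} {𝔄 : Set (Finset X)} {α : X → ℝ} (hα : IsState 𝔄 α)
    {E : Finset X} (hE : E ∈ 𝔄) : 0 ≤ locEnt E α := by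
  refine sum_nonneg fun x hx => neg_nonneg.2 (mul_nonpos_of_nonneg_of_nonpos (hα.1 E hE x hx) ?_)
  refine Real.logb_nonpos one_lt_two (hα.1 E hE x hx) ?_
  exact hα.2 E hE ▸ single_le_sum (hα.1 E hE) hx

theorem IsState.measEnt_le_locEnt_s19 {X : Type*} {𝔄 : Set (Finset X)} {α : X → ℝ}
    (hα : IsState 𝔄 α) {E : Finset X} (hE : E ∈ 𝔄) : measEnt 𝔄 α ≤ locEnt E α :=
  csInf_le ⟨0, by rintro _ ⟨E, hE, rfl⟩; exact hα.locEnt_nonneg_s19 hE⟩ ⟨E, hE, rfl⟩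

theorem locEnt_image_of_injective {X : Type*} [DecidableEq X] {n : ℕ} {a : Fin n → X}
    (ha : Function.Injective a) (α : X → ℝ) : locEnt (univ.image a) α = shannon (α ∘ a) :=
  sum_image fun _ _ _ _ h => ha h

theorem measEnt_le_mixEnt_of_steering_general {X Y : Type*} [DecidableEq X] [Fintype Y]
    (𝔄 : Set (Finset X)) (𝔅 : Set (Finset Y))
    (h𝔅 : 𝔅.Nonempty)
    (ΩB : Set (Y → ℝ)) (hconvB : Convex ℝ ΩB) (hcompB : IsCompact ΩB)
    (ℭ : Set (Finset (X × Y))) (hprod : ∀ E ∈ 𝔄, ∀ F ∈ 𝔅, E ×ˢ F ∈ ℭ)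
    (ω : X × Y → ℝ) (hω : IsState ℭ ω)
    (ωA : X → ℝ) (hωA : ∀ F ∈ 𝔅, ∀ e, ωA e = ∑ f ∈ F, ω (e, f))
    (ωB : Y → ℝ)
    (hωBmem : ωB ∈ ΩB)
    (hsteer : ∀ (n : ℕ) (p : Fin n → ℝ) (β : Fin n → (Y → ℝ)),
      (∀ i, 0 ≤ p i) → (∑ i, p i = 1) →
      (∀ i, β i ∈ ΩB.extremePoints ℝ) → Function.Injective β →
      ((ωB : Y → ℝ) = fun f => ∑ i, p i * β i f) →
      ∃ a : Fin n → X, Function.Injective a ∧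
        (Finset.univ.image a ∈ 𝔄) ∧
        (∀ i, ωA (a i) = p i) ∧
        (∀ i, 0 < p i → ∀ f, ω (a i, f) = p i * β i f)) :
    measEnt 𝔄 ωA ≤ mixEnt ΩB ωB := by
  obtain ⟨F, hF⟩ := h𝔅
  have hA : IsState 𝔄 ωA := hω.marginal_fst (fun E hE => hprod E hE F hF) (hωA F hF)
  refine le_mixEnt hcompB hconvB hωBmem fun n p β hp0 hp1 hβ hβinj hωβ => ?_
  obtain ⟨a, ha, haA, hap, -⟩ := hsteer n p β hp0 hp1 hβ hβinj (by rw [hωβ]; ext f; simp)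
  calc measEnt 𝔄 ωA ≤ locEnt (univ.image a) ωA := hA.measEnt_le_locEnt_s19 haA
    _ = shannon p := by rw [locEnt_image_of_injective ha]; exact congrArg shannon (funext hap)

/-- steering bounds measurement entropy by mixing entropy: if ω
steers its marginal ω^B, then H(ω^A) ≤ S(ω^B). -/
theorem measEnt_le_mixEnt_of_steering {X Y : Type*} [DecidableEq X] [Fintype Y]
    (𝔄 : Set (Finset X)) (𝔅 : Set (Finset Y))
    (h𝔄 : 𝔄.Nonempty) (h𝔅 : 𝔅.Nonempty)
    (ΩB : Set (Y → ℝ)) (hconvB : Convex ℝ ΩB) (hcompB : IsCompact ΩB)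
    (ℭ : Set (Finset (X × Y))) (hprod : ∀ E ∈ 𝔄, ∀ F ∈ 𝔅, E ×ˢ F ∈ ℭ)
    (ω : X × Y → ℝ) (hω : IsState ℭ ω) (hns : NonSignaling 𝔄 𝔅 ω)
    (ωA : X → ℝ) (hωA : ∀ F ∈ 𝔅, ∀ e, ωA e = ∑ f ∈ F, ω (e, f))
    (ωB : Y → ℝ) (hωB : ∀ E ∈ 𝔄, ∀ f, ωB f = ∑ e ∈ E, ω (e, f))
    (hωBmem : ωB ∈ ΩB)
    (hsteer : ∀ (n : ℕ) (p : Fin n → ℝ) (β : Fin n → (Y → ℝ)),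
      (∀ i, 0 ≤ p i) → (∑ i, p i = 1) →
      (∀ i, β i ∈ ΩB.extremePoints ℝ) → Function.Injective β →
      ((ωB : Y → ℝ) = fun f => ∑ i, p i * β i f) →
      ∃ a : Fin n → X, Function.Injective a ∧
        (Finset.univ.image a ∈ 𝔄) ∧
        (∀ i, ωA (a i) = p i) ∧
        (∀ i, 0 < p i → ∀ f, ω (a i, f) = p i * β i f)) :
    measEnt 𝔄 ωA ≤ mixEnt ΩB ωB :=
  measEnt_le_mixEnt_of_steering_general 𝔄 𝔅 h𝔅 ΩB hconvB hcompB ℭ hprod ω hω ωA hωA ωB hωBmem hsteer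
end
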